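/- arXiv:2410.14688 — 5 statements merged into one kernel-verified Lean document; each statement's English description precedes it below -/
import Mathlib

section
/- Let f : (ℕ → ℕ) → (ℕ → ℤ) be defined by f(c)(i) = (c(i+1) : ℤ) - (c(i) : ℤ). Then f⁻¹(SumToInfinity) = FinOcc; that is, for every c : ℕ → ℕ, the partial sums k ↦ ∑_{i<k} (c(i+1) - c(i)) tend to +∞ if and only if every natural number occurs only finitely often in the sequence c. -/
/-! The partial sums telescope to `c k - c 0`, so they tend to `+∞` exactly when `c` does, and a
sequence of naturals tends to `∞` along the cofinite filter exactly when all its fibres are finite. -/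

/-- `SumToInfinity` is the set of integer sequences whose partial sums tend to `+∞`. -/
def SumToInfinity : Set (ℕ → ℤ) :=
  {w | Filter.Tendsto (fun k => ∑ i ∈ Finset.range k, w i) Filter.atTop Filter.atTop}

/-- `FinOcc` is the set of sequences of naturals in which every value occurs finitely often. -/
def FinOcc : Set (ℕ → ℕ) :=
  {c | ∀ m : ℕ, {k : ℕ | c k = m}.Finite}

open Filter

theorem tendsto_sub_const_atTop_iff {α G : Type*} [AddCommGroup G] [PartialOrder G]
    [IsOrderedAddMonoid G] {l : Filter α} {f : α → G} (C : G) :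
    Tendsto (fun x => f x - C) l atTop ↔ Tendsto f l atTop :=
  ⟨fun h => by simpa using tendsto_atTop_add_const_right l C h,
    fun h => by simpa [sub_eq_add_neg] using tendsto_atTop_add_const_right l (-C) h⟩

theorem tendsto_sum_range_sub_atTop_iff {G : Type*} [AddCommGroup G] [PartialOrder G]
    [IsOrderedAddMonoid G] (f : ℕ → G) :
    Tendsto (fun k => ∑ i ∈ Finset.range k, (f (i + 1) - f i)) atTop atTop ↔
      Tendsto f atTop atTop := by
  simp only [Finset.sum_range_sub]
  exact tendsto_sub_const_atTop_iff (f 0)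

theorem tendsto_cofinite_atTop_iff_finite_preimage_singleton {α : Type*} {c : α → ℕ} :
    Tendsto c cofinite atTop ↔ ∀ m, (c ⁻¹' {m}).Finite := by
  rw [← Nat.cofinite_eq_atTop, ← tendstoCofinite_iff,
    tendstoCofinite_iff_finite_preimage_singleton]

theorem preimage_sumToInfinity_eq_finOcc :
    (fun c : ℕ → ℕ => fun i : ℕ => ((c (i + 1) : ℤ) - (c i : ℤ))) ⁻¹' SumToInfinity
      = FinOcc := by
  ext c
  change Tendsto (fun k => ∑ i ∈ Finset.range k, ((c (i + 1) : ℤ) - c i)) atTop atTop ↔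
    ∀ m, (c ⁻¹' {m}).Finite
  rw [tendsto_sum_range_sub_atTop_iff (fun i => (c i : ℤ)), tendsto_natCast_atTop_iff,
    ← tendsto_cofinite_atTop_iff_finite_preimage_singleton, Nat.cofinite_eq_atTop]
end

section
/- The graph U satisfies SumToInfinity: for every infinite path in U, i.e., for all u : ℕ → List Ordinal and w : ℕ → ℤ such that for every i there is an edge u(i) →w(i) u(i+1) in U, the partial sums k ↦ ∑_{i<k} w i tend to +∞. -/
/-!
Along a path in `U` the slack `|u 0| + ∑ i < k, w i - |u k|` is nondecreasing, and an edge
leaves it unchanged only if the list decreases lexicographically. If the partial sums stay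
below some `b` infinitely often, the slack is bounded, hence eventually constant, so from
then on the path descends lexicographically; at the infinitely many times where the partial
sum is below `b` its lists have bounded length. This contradicts the well-foundedness of the
lexicographic order on lists of ordinals of bounded length.
-/

/-- The edge relation of the graph `U`. -/
def UEdge (u : List Ordinal) (w : ℤ) (u' : List Ordinal) : Prop :=
  (u'.length : ℤ) ≤ (u.length : ℤ) + w ∧
    ((u.length : ℤ) + w = (u'.length : ℤ) → List.Lex (· < ·) u' u)

open Filter

namespace List

theorem wellFounded_lex_of_length_le {α : Type*} [LT α] [WellFoundedLT α] (L : ℕ) :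
    WellFounded fun l₁ l₂ : {l : List α // l.length ≤ L} => Lex (· < ·) l₁.1 l₂.1 := by
  induction L with
  | zero =>
    refine ⟨fun l => ⟨l, fun l' h => absurd h ?_⟩⟩
    rw [length_eq_zero_iff.mp (Nat.le_zero.mp l.2)]
    exact not_lex_nil
  | succ L ih =>
    let split (l : {l : List α // l.length ≤ L + 1}) : WithBot α × {l : List α // l.length ≤ L} :=
      (l.1.head?, ⟨l.1.tail, by simpa using l.2⟩)
    refine Subrelation.wf (fun {l₁ l₂} h => ?_) (InvImage.wf split (wellFounded_lt.prod_lex ih))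
    obtain ⟨l₁, h₁⟩ := l₁
    obtain ⟨l₂, h₂⟩ := l₂
    cases h with
    | nil => exact Prod.Lex.left _ _ (WithBot.bot_lt_coe _)
    | cons h => exact Prod.Lex.right _ h
    | rel h => exact Prod.Lex.left _ _ (WithBot.coe_lt_coe.2 h)

theorem not_frequently_length_le_of_lex_succ {α : Type*} [Preorder α] [WellFoundedLT α]
    {v : ℕ → List α} {N : ℕ} (hv : ∀ k ≥ N, Lex (· < ·) (v (k + 1)) (v k)) (L : ℕ) :
    ¬ ∃ᶠ k in atTop, (v k).length ≤ L := by
  intro hL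
  obtain ⟨φ, hφ, hφ'⟩ :=
    extraction_of_frequently_atTop (hL.and_eventually (eventually_ge_atTop N))
  have : IsTrans (List α) fun l₁ l₂ => Lex (· < ·) l₂ l₁ :=
    ⟨fun _ _ _ h₁₂ h₂₃ => lex_trans lt_trans h₂₃ h₁₂⟩
  have hdesc (n : ℕ) : Lex (· < ·) (v (φ (n + 1))) (v (φ n)) :=
    Nat.rel_of_forall_rel_succ_of_le_of_lt (fun l₁ l₂ => Lex (· < ·) l₂ l₁) hv (hφ' n).2
      (hφ n.lt_succ_self)
  exact (wellFounded_iff_isEmpty_descending_chain.1 (wellFounded_lex_of_length_le L)).false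
    ⟨fun n => ⟨v (φ n), (hφ' n).1⟩, hdesc⟩

end List

theorem Int.exists_forall_ge_eq_of_monotone {f : ℕ → ℤ} (hf : Monotone f)
    (hb : BddAbove (Set.range f)) : ∃ N, ∀ k ≥ N, f k = f N := by
  obtain ⟨_, ⟨N, rfl⟩, hmax⟩ := Int.exists_greatest_of_bdd (P := (· ∈ Set.range f))
    (by simpa [BddAbove, upperBounds, Set.Nonempty] using hb) ⟨f 0, 0, rfl⟩
  exact ⟨N, fun k hk => le_antisymm (hmax _ ⟨k, rfl⟩) (hf hk)⟩

def slack (u : ℕ → List Ordinal) (w : ℕ → ℤ) (k : ℕ) : ℤ :=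
  (u 0).length + ∑ i ∈ Finset.range k, w i - (u k).length

theorem slack_succ (u : ℕ → List Ordinal) (w : ℕ → ℤ) (k : ℕ) :
    slack u w (k + 1) = slack u w k + ((u k).length + w k - (u (k + 1)).length) := by
  simp only [slack, Finset.sum_range_succ]
  ring

theorem slack_monotone {u : ℕ → List Ordinal} {w : ℕ → ℤ}
    (h : ∀ i, UEdge (u i) (w i) (u (i + 1))) : Monotone (slack u w) :=
  monotone_nat_of_le_succ fun k => by linarith [slack_succ u w k, (h k).1]

theorem lex_of_slack_succ_eq {u : ℕ → List Ordinal} {w : ℕ → ℤ}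
    (h : ∀ i, UEdge (u i) (w i) (u (i + 1))) {k : ℕ} (hk : slack u w (k + 1) = slack u w k) :
    List.Lex (· < ·) (u (k + 1)) (u k) :=
  (h k).2 (by linarith [slack_succ u w k])

theorem U_satisfies_sumToInfinity (u : ℕ → List Ordinal) (w : ℕ → ℤ)
    (h : ∀ i, UEdge (u i) (w i) (u (i + 1))) :
    Filter.Tendsto (fun k => ∑ i ∈ Finset.range k, w i) Filter.atTop Filter.atTop := by
  by_contra hS
  obtain ⟨b, hb⟩ : ∃ b, ∃ᶠ k in atTop, ∑ i ∈ Finset.range k, w i < b := by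
    simpa [tendsto_atTop, frequently_atTop] using hS
  have hbdd : BddAbove (Set.range (slack u w)) := by
    refine ⟨(u 0).length + b, Set.forall_mem_range.2 fun k => ?_⟩
    obtain ⟨k', hkk', hk'⟩ := frequently_atTop.1 hb k
    have := slack_monotone h hkk'
    simp only [slack] at this ⊢
    omega
  obtain ⟨N, hN⟩ := Int.exists_forall_ge_eq_of_monotone (slack_monotone h) hbdd
  refine List.not_frequently_length_le_of_lex_succ
    (fun k hk => lex_of_slack_succ_eq h ((hN (k + 1) (by omega)).trans (hN k hk).symm))
    ((u 0).length + b - slack u w N).toNat ((hb.and_eventually (eventually_ge_atTop N)).mono ?_)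
  rintro k ⟨hk, hNk⟩
  have := hN k hNk
  simp only [slack] at this ⊢
  omega
end

section
/- Every cycle in the graph U has strictly positive total weight: for every k ≥ 1, every u : ℕ → List Ordinal and w : ℕ → ℤ such that u(0) = u(k) and for every i < k there is an edge u(i) →w(i) u(i+1) in U, one has ∑_{i<k} w i ≥ 1. -/
theorem UEdge.toLex_lt {u u' : List Ordinal} {w : ℤ} (h : UEdge u w u') (c : ℤ) :
    toLex ((u'.length : ℤ) - (c + w), u') < toLex ((u.length : ℤ) - c, u) := by
  exact Prod.Lex.toLex_lt_toLex'.2 ⟨by linarith [h.1], fun heq => h.2 (by linarith)⟩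

theorem U_cycles_positive (k : ℕ) (hk : 1 ≤ k) (u : ℕ → List Ordinal) (w : ℕ → ℤ)
    (hcycle : u 0 = u k) (h : ∀ i < k, UEdge (u i) (w i) (u (i + 1))) :
    1 ≤ ∑ i ∈ Finset.range k, w i := by
  set Φ : ℕ → ℤ ×ₗ List Ordinal :=
    fun i => toLex (((u i).length : ℤ) - ∑ j ∈ Finset.range i, w j, u i)
  have hanti : StrictAntiOn Φ (Set.Iic k) := strictAntiOn_Iic_of_succ_lt fun i hi => by
    simpa only [Φ, Order.succ_eq_add_one, Finset.sum_range_succ] using (h i hi).toLex_lt _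
  have hdrop : Φ k < Φ 0 := hanti (Set.mem_Iic.2 (Nat.zero_le k)) (Set.mem_Iic.2 le_rfl) hk
  by_contra! hS
  refine hdrop.not_ge (Prod.Lex.toLex_le_toLex'.2 ⟨?_, fun _ => ?_⟩)
  · simp only [Finset.range_zero, Finset.sum_empty, hcycle]
    omega
  · exact hcycle.le
end

section
/- Let V be a nonempty type and E : V → ℤ → V → Prop a ℤ-labelled edge relation such that every infinite path satisfies SumToInfinity (i.e., for all v : ℕ → V and w : ℕ → ℤ with E (v i) (w i) (v (i+1)) for all i, the partial sums of w tend to +∞). Then there exists a vertex v₀ such that every nonempty finite path starting at v₀ has total weight ≥ 1. -/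
/-!
If every vertex `u` had a nonempty path of total weight `≤ 0`, we could start anywhere, follow
the chosen path of the current vertex to its end, switch to the chosen path of that endpoint,
and so on. The resulting infinite path has partial sums `≤ 0` at every junction, hence
infinitely often, so they cannot tend to `+∞`.
-/

open Finset Filter

namespace PathConcat

variable {V M : Type*}

/-- `K u` and `X u` are the length and the vertices of the path chosen for `u`; the state
`(u, j)` stands for position `j` on that path, and at its end we jump to the start of the path
chosen for its endpoint. -/
def step (K : V → ℕ) (X : V → ℕ → V) (s : V × ℕ) : V × ℕ :=
  if s.2 + 1 < K s.1 then (s.1, s.2 + 1) else (X s.1 (K s.1), 0)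

def state (K : V → ℕ) (X : V → ℕ → V) (u : V) (n : ℕ) : V × ℕ :=
  (step K X)^[n] (u, 0)

variable {K : V → ℕ} {X : V → ℕ → V}

theorem state_succ (u : V) (n : ℕ) : state K X u (n + 1) = step K X (state K X u n) :=
  Function.iterate_succ_apply' _ _ _

theorem step_snd_lt (hK : ∀ u, 0 < K u) (s : V × ℕ) : (step K X s).2 < K (step K X s).1 := by
  unfold step
  split_ifs with h
  · exact h
  · exact hK _

theorem state_snd_lt (hK : ∀ u, 0 < K u) (u : V) (n : ℕ) :
    (state K X u n).2 < K (state K X u n).1 := by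
  cases n with
  | zero => exact hK u
  | succ n => rw [state_succ]; exact step_snd_lt hK _

theorem edge_step {E : V → M → V → Prop} {W : V → ℕ → M} (hX0 : ∀ u, X u 0 = u)
    (hE : ∀ u, ∀ i < K u, E (X u i) (W u i) (X u (i + 1)))
    {s : V × ℕ} (hs : s.2 < K s.1) :
    E (X s.1 s.2) (W s.1 s.2) (X (step K X s).1 (step K X s).2) := by
  unfold step
  split_ifs with h
  · exact hE _ _ hs
  · have hend : s.2 + 1 = K s.1 := by omega
    simpa [hX0, hend] using hE _ _ hs

/-- At a junction (`j = 0`) the right-hand side is an empty sum, so the partial sums are `≤ 0`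
there. -/
theorem sum_le_sum_state [AddCommMonoid M] [PartialOrder M] [IsOrderedAddMonoid M]
    {W : V → ℕ → M} (hW : ∀ u, ∑ i ∈ range (K u), W u i ≤ 0)
    (hK : ∀ u, 0 < K u) (u : V) (n : ℕ) :
    ∑ i ∈ range n, W (state K X u i).1 (state K X u i).2 ≤
      ∑ i ∈ range (state K X u n).2, W (state K X u n).1 i := by
  induction n with
  | zero => simp [state]
  | succ n ih =>
    set s := state K X u n
    have hs : s.2 < K s.1 := state_snd_lt hK u n
    rw [sum_range_succ, state_succ]
    calc ∑ i ∈ range n, W (state K X u i).1 (state K X u i).2 + W s.1 s.2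
        ≤ ∑ i ∈ range (s.2 + 1), W s.1 i := by
          rw [sum_range_succ]; exact add_le_add_left ih _
      _ ≤ ∑ i ∈ range (step K X s).2, W (step K X s).1 i := by
          unfold step
          split_ifs with h
          · exact le_rfl
          · simpa [show s.2 + 1 = K s.1 by omega] using hW s.1

theorem exists_iterate_step_snd_eq_zero (s : V × ℕ) : ∃ m, ((step K X)^[m] s).2 = 0 := by
  obtain ⟨d, hd⟩ : ∃ d, K s.1 ≤ s.2 + 1 + d := ⟨K s.1, by omega⟩
  induction d generalizing s with
  | zero => exact ⟨1, by simp [step, show ¬s.2 + 1 < K s.1 by omega]⟩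
  | succ d ih =>
    by_cases h : s.2 + 1 < K s.1
    · obtain ⟨m, hm⟩ := ih (s.1, s.2 + 1) (by simp only; omega)
      exact ⟨m + 1, by rwa [Function.iterate_succ_apply, step, if_pos h]⟩
    · exact ⟨1, by simp [step, h]⟩

theorem frequently_state_snd_eq_zero (u : V) : ∃ᶠ n in atTop, (state K X u n).2 = 0 := by
  refine frequently_atTop.2 fun N => ?_
  obtain ⟨m, hm⟩ := exists_iterate_step_snd_eq_zero (K := K) (X := X) (state K X u N)
  refine ⟨m + N, Nat.le_add_left N m, ?_⟩
  rwa [state, Function.iterate_add_apply]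

end PathConcat

open PathConcat in
theorem exists_infinite_path_frequently_nonpos {V M : Type*} [AddCommMonoid M] [PartialOrder M]
    [IsOrderedAddMonoid M] (E : V → M → V → Prop)
    (h : ∀ u, ∃ (k : ℕ) (x : ℕ → V) (w : ℕ → M), 1 ≤ k ∧ x 0 = u ∧
      (∀ i < k, E (x i) (w i) (x (i + 1))) ∧ ∑ i ∈ range k, w i ≤ 0) (u : V) :
    ∃ (v : ℕ → V) (w : ℕ → M), (∀ i, E (v i) (w i) (v (i + 1))) ∧
      ∃ᶠ n in atTop, ∑ i ∈ range n, w i ≤ 0 := by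
  choose K X W hK hX0 hE hW using h
  refine ⟨fun n => X (state K X u n).1 (state K X u n).2,
    fun n => W (state K X u n).1 (state K X u n).2, fun n => ?_, ?_⟩
  · simp only [state_succ]
    exact edge_step hX0 hE (state_snd_lt hK u n)
  · refine (frequently_state_snd_eq_zero (K := K) (X := X) u).mono fun n hn => ?_
    simpa [hn] using sum_le_sum_state (X := X) hW hK u n

theorem exists_vertex_all_paths_positive (V : Type*) [Nonempty V] (E : V → ℤ → V → Prop)
    (hsat : ∀ (v : ℕ → V) (w : ℕ → ℤ), (∀ i, E (v i) (w i) (v (i + 1))) →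
      Filter.Tendsto (fun k => ∑ i ∈ Finset.range k, w i) Filter.atTop Filter.atTop) :
    ∃ v₀ : V, ∀ (k : ℕ) (x : ℕ → V) (w : ℕ → ℤ), 1 ≤ k → x 0 = v₀ →
      (∀ i < k, E (x i) (w i) (x (i + 1))) → 1 ≤ ∑ i ∈ Finset.range k, w i := by
  by_contra! h
  obtain ⟨v, w, hpath, hnonpos⟩ :=
    exists_infinite_path_frequently_nonpos E (fun u => by simpa [Int.lt_iff_add_one_le] using h u)
      (Classical.arbitrary V)
  obtain ⟨n, hn, hpos⟩ := (hnonpos.and_eventually ((hsat v w hpath).eventually_ge_atTop 1)).exists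
  omega
end

section
/- Let u : ℕ → List Ordinal and w : ℕ → ℤ be an infinite path in the graph U (so that for every i, u(i) →w(i) u(i+1) is an edge of U), and for each i define b i : ℤ to be 0 if (u(i).length : ℤ) + w(i) = u(i+1).length and 1 otherwise. Then for every k, ∑_{i<k} w i ≥ (u(k).length : ℤ) - u(0).length + ∑_{i<k} b i. -/
open Finset

theorem sub_add_sum_le_sum_of_succ_add_le {α : Type*} [AddCommGroup α] [PartialOrder α]
    [IsOrderedAddMonoid α] {f b w : ℕ → α} (h : ∀ i, f (i + 1) + b i ≤ f i + w i) (k : ℕ) :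
    f k - f 0 + ∑ i ∈ range k, b i ≤ ∑ i ∈ range k, w i := by
  rw [← sum_range_sub, ← sum_add_distrib]
  refine sum_le_sum fun i _ => ?_
  calc f (i + 1) - f i + b i = f (i + 1) + b i - f i := by abel
    _ ≤ f i + w i - f i := sub_le_sub_right (h i) _
    _ = w i := add_sub_cancel_left _ _

theorem UEdge.length_add_le {u u' : List Ordinal} {w : ℤ} (h : UEdge u w u') :
    (u'.length : ℤ) + (if (u.length : ℤ) + w = u'.length then 0 else 1) ≤ u.length + w := by
  obtain ⟨hlen, -⟩ := h
  split_ifs <;> omega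

theorem partial_sums_ge_length_plus_b (u : ℕ → List Ordinal) (w : ℕ → ℤ)
    (h : ∀ i, UEdge (u i) (w i) (u (i + 1)))
    (b : ℕ → ℤ)
    (hb : ∀ i, b i = if ((u i).length : ℤ) + w i = ((u (i + 1)).length : ℤ) then 0 else 1)
    (k : ℕ) :
    ((u k).length : ℤ) - ((u 0).length : ℤ) + ∑ i ∈ Finset.range k, b i
      ≤ ∑ i ∈ Finset.range k, w i := by
  refine sub_add_sum_le_sum_of_succ_add_le (f := fun i => ((u i).length : ℤ)) (fun i => ?_) k
  rw [hb i]
  exact (h i).length_add_le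
end
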